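/- Let Γ be a bipartite distance-regular graph of diameter 3 with intersection array {k, k−1, k−μ; 1, μ, k}, where 1 ≤ μ ≤ k−1 (i.e., a distance-biregular graph with k₀ = k₁ = k, D₀ = D₁ = 3, and c_{0,2} = c_{1,2} = μ). Then Γ has the M-property if and only if 4k/5 ≤ μ ≤ k−1; moreover, these inequalities imply k ≥ 5. -/

import Mathlib

/-!
The distance matrices `I, A, D₂, D₃` of `Γ` span a commutative algebra in which multiplication
by `A` is given by the intersection numbers. Solving `L M = I - J / n` inside this algebra gives
`M = ∑ aᵢ Dᵢ`; since moreover `M J = 0`, `M` is a group inverse of `L`, so `L^# = M` by uniqueness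
and `L^#(x, y) = a_{d(x, y)}`. The `aᵢ` decrease for `i ≥ 1`, so the M-property amounts to
`a₁ ≤ 0`. The numerator of `a₁` is `k (k - 1) (4k - 5μ) - μ²`, which for integers
`1 ≤ μ ≤ k - 1` is nonpositive exactly when `4k ≤ 5μ`.
-/

open Finset SimpleGraph

def IsGroupInverse {S : Type*} [Mul S] (a x : S) : Prop :=
  a * x * a = a ∧ x * a * x = x ∧ a * x = x * a

theorem IsGroupInverse.unique {S : Type*} [Semigroup S] {a x y : S} (hx : IsGroupInverse a x)
    (hy : IsGroupInverse a y) : x = y := by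
  obtain ⟨hx₁, hx₂, hx₃⟩ := hx
  obtain ⟨hy₁, hy₂, hy₃⟩ := hy
  have key : a * x = y * a :=
    calc a * x = a * y * a * x := by rw [hy₁]
      _ = y * (a * (x * a)) := by rw [hy₃, ← hx₃]; simp only [mul_assoc]
      _ = y * a := by rw [← mul_assoc a x a, hx₁]
  calc x = x * a * x := hx₂.symm
    _ = a * x * x := by rw [hx₃]
    _ = y * a * x := by rw [key]
    _ = y * (a * y) := by rw [mul_assoc, key, hy₃]
    _ = y := by rw [← mul_assoc, hy₂]

theorem isGroupInverse_of_mul_eq {S : Type*} [Semigroup S] {a x e : S} (hax : a * x = e)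
    (hxa : x * a = e) (hea : e * a = a) (hex : e * x = x) : IsGroupInverse a x :=
  ⟨by rw [hax, hea], by rw [hxa, hex], hax.trans hxa.symm⟩

namespace SimpleGraph

variable {V : Type*} (G : SimpleGraph V) (R : Type*)

noncomputable def distMatrix [Zero R] [One R] (i : ℕ) : Matrix V V R :=
  Matrix.of fun x y => if G.dist x y = i then 1 else 0

variable {G R}

@[simp]
theorem distMatrix_apply [Zero R] [One R] (i : ℕ) (x y : V) :
    G.distMatrix R i x y = if G.dist x y = i then 1 else 0 := rfl

theorem distMatrix_one [Zero R] [One R] [DecidableRel G.Adj] :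
    G.distMatrix R 1 = G.adjMatrix R := by
  ext x y
  simp

theorem Connected.distMatrix_zero [DecidableEq V] [Zero R] [One R] (hconn : G.Connected) :
    G.distMatrix R 0 = 1 := by
  ext x y
  simp [Matrix.one_apply, hconn.dist_eq_zero_iff]

theorem distMatrix_eq_zero_of_lt [Zero R] [One R] {d i : ℕ} (hd : ∀ x y, G.dist x y ≤ d)
    (hi : d < i) : G.distMatrix R i = 0 := by
  ext x y
  rw [distMatrix_apply, if_neg (by have := hd x y; omega), Matrix.zero_apply]

theorem sum_smul_distMatrix_apply [Fintype V] [Semiring R] (a : ℕ → R) {d : ℕ} {x y : V}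
    (hxy : G.dist x y ≤ d) :
    (∑ i ∈ range (d + 1), a i • G.distMatrix R i) x y = a (G.dist x y) := by
  simp [Matrix.sum_apply, Nat.lt_succ_of_le hxy]

theorem adjMatrix_mul_distMatrix_apply [Fintype V] [NonAssocSemiring R] [DecidableRel G.Adj]
    (i : ℕ) (x y : V) :
    (G.adjMatrix R * G.distMatrix R i) x y = #{z | G.dist y z = i ∧ G.Adj x z} := by
  rw [adjMatrix_mul_apply, neighborFinset_eq_filter, sum_filter, ← sum_boole]
  simp_rw [distMatrix_apply, dist_comm (u := y), and_comm (a := G.dist _ y = i), ite_and]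

theorem IsRegularOfDegree.card_adj_dist_add [Fintype V] [DecidableRel G.Adj] {k : ℕ}
    (hreg : G.IsRegularOfDegree k) {x y : V} {j : ℕ} (hj : 1 ≤ j) (hxy : G.dist y x = j) :
    #{z | G.dist y z = j - 1 ∧ G.Adj x z} + #{z | G.dist y z = j ∧ G.Adj x z}
      + #{z | G.dist y z = j + 1 ∧ G.Adj x z} = k := by
  have hfiber : ∀ z ∈ G.neighborFinset x, G.dist y z ∈ ({j - 1, j, j + 1} : Finset ℕ) := by
    intro z hz
    rcases ((G.mem_neighborFinset x z).mp hz).diff_dist_adj (u := y) with h | h | h <;>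
      simp [h, hxy]
  rw [← hreg x, ← card_neighborFinset_eq_degree, card_eq_sum_card_fiberwise hfiber,
    sum_insert (by simp; omega), sum_insert (by simp), sum_singleton, add_assoc]
  simp only [neighborFinset_eq_filter, filter_filter, and_comm]

/-- The coefficient `k - b i - c i` of `Dᵢ` is the intersection number `aᵢ`. -/
theorem IsRegularOfDegree.adjMatrix_mul_distMatrix [Fintype V] [NonAssocSemiring R]
    [DecidableRel G.Adj] {k : ℕ} (hreg : G.IsRegularOfDegree k) {c b : ℕ → ℕ}
    (hc : ∀ (x y : V) (i : ℕ), G.dist x y = i → #{z | G.dist x z = i - 1 ∧ G.Adj y z} = c i)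
    (hb : ∀ (x y : V) (i : ℕ), G.dist x y = i → #{z | G.dist x z = i + 1 ∧ G.Adj y z} = b i)
    {i : ℕ} (hi : 1 ≤ i) :
    G.adjMatrix R * G.distMatrix R i = b (i - 1) • G.distMatrix R (i - 1)
      + (k - b i - c i) • G.distMatrix R i + c (i + 1) • G.distMatrix R (i + 1) := by
  ext x y
  rw [adjMatrix_mul_distMatrix_apply]
  simp only [Matrix.add_apply, Matrix.smul_apply, distMatrix_apply, smul_ite, smul_zero, nsmul_one,
    dist_comm (u := x)]
  obtain ⟨j, hj⟩ : ∃ j, G.dist y x = j := ⟨_, rfl⟩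
  rw [hj]
  by_cases hlow : j + 1 = i
  · subst hlow
    rw [if_pos (by omega), if_neg (by omega), if_neg (by omega), Nat.add_sub_cancel,
      hb y x j hj, add_zero, add_zero]
  by_cases hmid : j = i
  · subst hmid
    have hsum := hreg.card_adj_dist_add hi hj
    rw [hc y x j hj, hb y x j hj] at hsum
    rw [if_neg (by omega), if_pos rfl, if_neg (by omega), zero_add, add_zero,
      show #{z | G.dist y z = j ∧ G.Adj x z} = k - b j - c j by omega]
  by_cases hhigh : j = i + 1
  · subst hhigh
    rw [if_neg (by omega), if_neg (by omega), if_pos rfl, ← hc y x _ hj, Nat.add_sub_cancel,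
      zero_add, zero_add]
  have hnone : #{z | G.dist y z = i ∧ G.Adj x z} = 0 := by
    refine card_eq_zero.mpr (filter_eq_empty_iff.mpr fun z _ ⟨hz, hadj⟩ => ?_)
    rcases hadj.diff_dist_adj (u := y) with h | h | h <;> omega
  rw [if_neg (by omega), if_neg hmid, if_neg hhigh, hnone, Nat.cast_zero, add_zero, add_zero]

theorem IsRegularOfDegree.lapMatrix_eq [Fintype V] [DecidableEq V] [Ring R] [DecidableRel G.Adj]
    {k : ℕ} (hreg : G.IsRegularOfDegree k) : G.lapMatrix R = (k : R) • 1 - G.adjMatrix R := by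
  rw [lapMatrix, degMatrix, Matrix.smul_one_eq_diagonal]
  simp only [hreg _]

end SimpleGraph

/-- The relations `A Dᵢ = b_{i-1} D_{i-1} + aᵢ Dᵢ + c_{i+1} D_{i+1}` of the intersection array
`{k, k - 1, k - μ; 1, μ, k}`, with `A, D₂, D₃` in the roles of the distance-`1, 2, 3` matrices. -/
structure IntersectionRelations {𝔸 : Type*} [Ring 𝔸] [Algebra ℝ 𝔸] (k μ : ℝ) (A D₂ D₃ : 𝔸) :
    Prop where
  adj_mul_adj : A * A = k • 1 + μ • D₂
  adj_mul_dist₂ : A * D₂ = (k - 1) • A + k • D₃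
  adj_mul_dist₃ : A * D₃ = (k - μ) • D₂

/-- The number of vertices `1 + k + k (k - 1) / μ + (k - 1) (k - μ) / μ`, summed over the
distance spheres. -/
noncomputable def vertexCount (k μ : ℝ) : ℝ := 2 * (k ^ 2 - k + μ) / μ

/-- With `kᵢ` the size of the distance-`i` sphere and `n = vertexCount k μ`, the differences
`aᵢ - a_{i+1} = (k_{i+1} + ⋯ + k₃) / (n kᵢ bᵢ)` come from `L M = I - J / n`, and `a₁` is then
fixed by `∑ kᵢ aᵢ = 0`. -/
noncomputable def lapInvCoeff (k μ : ℝ) (i : ℕ) : ℝ :=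
  let n := vertexCount k μ
  ((k - 1) * (2 * k - μ) ^ 2 - k * μ * (k - 1 + μ)) / (n ^ 2 * k * μ ^ 2) +
    match i with
    | 0 => (n - 1) / (n * k)
    | 1 => 0
    | 2 => -(2 * k - μ) / (n * k * μ)
    | _ => -(2 * k - μ) / (n * k * μ) - 1 / (n * k)

noncomputable def lapGroupInverse {𝔸 : Type*} [Ring 𝔸] [Algebra ℝ 𝔸] (k μ : ℝ) (A D₂ D₃ : 𝔸) :
    𝔸 :=
  lapInvCoeff k μ 0 • 1 + lapInvCoeff k μ 1 • A + lapInvCoeff k μ 2 • D₂ + lapInvCoeff k μ 3 • D₃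

theorem vertexCount_pos {k μ : ℝ} (hk : 1 ≤ k) (hμ : 0 < μ) : 0 < vertexCount k μ := by
  unfold vertexCount
  have : 0 < k ^ 2 - k + μ := by nlinarith
  positivity

theorem lapInvCoeff_row_sum {k μ : ℝ} (hk : k ≠ 0) (hμ : μ ≠ 0) :
    lapInvCoeff k μ 0 + lapInvCoeff k μ 1 * k + lapInvCoeff k μ 2 * (k * (k - 1) / μ)
      + lapInvCoeff k μ 3 * ((k - 1) * (k - μ) / μ) = 0 := by
  simp only [lapInvCoeff, vertexCount]
  field_simp
  ring

theorem lapInvCoeff_le_lapInvCoeff_one {k μ : ℝ} (hk : 1 ≤ k) (hμ : 0 < μ) (hμk : μ ≤ 2 * k)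
    {i : ℕ} (hi : 1 ≤ i) : lapInvCoeff k μ i ≤ lapInvCoeff k μ 1 := by
  have hn := vertexCount_pos hk hμ
  have h₂ : 0 ≤ (2 * k - μ) / (vertexCount k μ * k * μ) := by
    apply div_nonneg <;> [linarith; positivity]
  have h₃ : 0 ≤ 1 / (vertexCount k μ * k) := by positivity
  obtain _ | _ | _ | i := i
  · omega
  · exact le_rfl
  · simp only [lapInvCoeff, neg_div]
    linarith
  · simp only [lapInvCoeff, neg_div]
    linarith

/-- Over the reals the numerator `k (k - 1) (4k - 5μ) - μ²` of `a₁` changes sign slightly below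
`μ = 4k / 5`; integrality closes the gap. -/
theorem lapInvCoeff_one_nonpos_iff {k μ : ℕ} (hμ : 1 ≤ μ) (hμk : μ + 1 ≤ k) :
    lapInvCoeff k μ 1 ≤ 0 ↔ 4 * k ≤ 5 * μ := by
  have hμR : (1 : ℝ) ≤ μ := by exact_mod_cast hμ
  have hμkR : (μ : ℝ) + 1 ≤ k := by exact_mod_cast hμk
  have hkk : (0 : ℝ) ≤ k * (k - 1) := by nlinarith
  have hden : 0 < vertexCount k μ ^ 2 * k * μ ^ 2 := by
    have := vertexCount_pos (by linarith) (by linarith : (0 : ℝ) < μ)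
    exact mul_pos (mul_pos (by positivity) (by linarith)) (by positivity)
  simp only [lapInvCoeff, add_zero]
  rw [div_le_iff₀ hden, zero_mul, show ((k : ℝ) - 1) * (2 * k - μ) ^ 2 - k * μ * (k - 1 + μ)
    = k * (k - 1) * (4 * k - 5 * μ) - μ ^ 2 by ring]
  constructor
  · intro hnum
    by_contra! hlt
    have h5 : 5 * (μ : ℝ) + 1 ≤ 4 * k := by exact_mod_cast (by omega : 5 * μ + 1 ≤ 4 * k)
    nlinarith [mul_le_mul_of_nonneg_left (by linarith : (1 : ℝ) ≤ 4 * k - 5 * μ) hkk]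
  · intro h45
    have h45R : 4 * (k : ℝ) ≤ 5 * μ := by exact_mod_cast h45
    nlinarith [mul_nonneg hkk (by linarith : (0 : ℝ) ≤ 5 * μ - 4 * k)]

namespace IntersectionRelations

variable {𝔸 : Type*} [Ring 𝔸] [Algebra ℝ 𝔸] {k μ : ℝ} {A D₂ D₃ : 𝔸}

theorem smul_dist₂_eq (h : IntersectionRelations k μ A D₂ D₃) : μ • D₂ = A * A - k • 1 := by
  rw [h.adj_mul_adj]
  abel

theorem smul_dist₃_eq (h : IntersectionRelations k μ A D₂ D₃) :
    k • D₃ = A * D₂ - (k - 1) • A := by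
  rw [h.adj_mul_dist₂]
  abel

theorem commute_dist₂ (h : IntersectionRelations k μ A D₂ D₃) (hμ : μ ≠ 0) : Commute A D₂ := by
  have : Commute A (μ • D₂) := by
    rw [h.smul_dist₂_eq]
    exact ((Commute.refl A).mul_right (Commute.refl A)).sub_right
      ((Commute.one_right A).smul_right k)
  simpa [hμ] using this.smul_right μ⁻¹

theorem commute_dist₃ (h : IntersectionRelations k μ A D₂ D₃) (hk : k ≠ 0) (hμ : μ ≠ 0) :
    Commute A D₃ := by
  have : Commute A (k • D₃) := by
    rw [h.smul_dist₃_eq]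
    exact ((Commute.refl A).mul_right (h.commute_dist₂ hμ)).sub_right
      ((Commute.refl A).smul_right _)
  simpa [hk] using this.smul_right k⁻¹

theorem commute_dist₂_dist₃ (h : IntersectionRelations k μ A D₂ D₃) (hk : k ≠ 0) (hμ : μ ≠ 0) :
    Commute D₂ D₃ := by
  have hA₃ := h.commute_dist₃ hk hμ
  have : Commute (μ • D₂) D₃ := by
    rw [h.smul_dist₂_eq]
    exact (hA₃.mul_left hA₃).sub_left ((Commute.one_left D₃).smul_left k)
  simpa [hμ] using this.smul_left μ⁻¹

theorem adj_mul_ones (h : IntersectionRelations k μ A D₂ D₃) :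
    A * (1 + A + D₂ + D₃) = k • (1 + A + D₂ + D₃) := by
  simp only [mul_add, mul_one, h.adj_mul_adj, h.adj_mul_dist₂, h.adj_mul_dist₃]
  module

theorem dist₂_mul_ones (h : IntersectionRelations k μ A D₂ D₃) (hμ : μ ≠ 0) :
    D₂ * (1 + A + D₂ + D₃) = (k * (k - 1) / μ) • (1 + A + D₂ + D₃) := by
  have : μ • (D₂ * (1 + A + D₂ + D₃)) = (k * (k - 1)) • (1 + A + D₂ + D₃) := by
    rw [← smul_mul_assoc, h.smul_dist₂_eq, sub_mul, mul_assoc, h.adj_mul_ones, mul_smul_comm,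
      h.adj_mul_ones, smul_mul_assoc, one_mul, smul_smul]
    module
  rw [← inv_smul_smul₀ hμ (D₂ * _), this, smul_smul]
  congr 1
  field_simp

theorem dist₃_mul_ones (h : IntersectionRelations k μ A D₂ D₃) (hk : k ≠ 0) (hμ : μ ≠ 0) :
    D₃ * (1 + A + D₂ + D₃) = ((k - 1) * (k - μ) / μ) • (1 + A + D₂ + D₃) := by
  have : k • (D₃ * (1 + A + D₂ + D₃)) = (k * (k - 1) * (k - μ) / μ) • (1 + A + D₂ + D₃) := by
    rw [← smul_mul_assoc, h.smul_dist₃_eq, sub_mul, mul_assoc, h.dist₂_mul_ones hμ,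
      mul_smul_comm, h.adj_mul_ones, smul_mul_assoc, h.adj_mul_ones, smul_smul, smul_smul,
      ← sub_smul]
    congr 1
    field_simp
  rw [← inv_smul_smul₀ hk (D₃ * _), this, smul_smul]
  congr 1
  field_simp

theorem commute_lapGroupInverse {X : 𝔸} (hA : Commute X A) (h₂ : Commute X D₂)
    (h₃ : Commute X D₃) : Commute X (lapGroupInverse k μ A D₂ D₃) :=
  ((((Commute.one_right X).smul_right _).add_right (hA.smul_right _)).add_right
    (h₂.smul_right _)).add_right (h₃.smul_right _)

theorem lap_mul_lapGroupInverse (h : IntersectionRelations k μ A D₂ D₃) (hk : k ≠ 0)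
    (hμ : μ ≠ 0) (hn : vertexCount k μ ≠ 0) :
    (k • 1 - A) * lapGroupInverse k μ A D₂ D₃ = 1 - (vertexCount k μ)⁻¹ • (1 + A + D₂ + D₃) := by
  have hnμ : vertexCount k μ * μ = 2 * (k ^ 2 - k + μ) := by
    unfold vertexCount
    field_simp
  simp only [lapGroupInverse, sub_mul, mul_add, mul_smul_comm, smul_mul_assoc, one_mul, mul_one,
    h.adj_mul_adj, h.adj_mul_dist₂, h.adj_mul_dist₃]
  match_scalars <;> simp only [lapInvCoeff] <;> field_simp
  · ring
  · linear_combination (-μ * vertexCount k μ) * hnμ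
  · ring
  · ring

theorem lapGroupInverse_mul_ones (h : IntersectionRelations k μ A D₂ D₃) (hk : k ≠ 0)
    (hμ : μ ≠ 0) : lapGroupInverse k μ A D₂ D₃ * (1 + A + D₂ + D₃) = 0 := by
  simp only [lapGroupInverse, add_mul, smul_mul_assoc, one_mul, h.adj_mul_ones,
    h.dist₂_mul_ones hμ, h.dist₃_mul_ones hk hμ, smul_smul, ← add_smul]
  rw [lapInvCoeff_row_sum hk hμ, zero_smul]

theorem isGroupInverse (h : IntersectionRelations k μ A D₂ D₃) (hk : 1 ≤ k) (hμ : 0 < μ) :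
    IsGroupInverse (k • 1 - A) (lapGroupInverse k μ A D₂ D₃) := by
  have hk₀ : k ≠ 0 := by positivity
  have hμ₀ : μ ≠ 0 := hμ.ne'
  have hA₂ := h.commute_dist₂ hμ₀
  have hA₃ := h.commute_dist₃ hk₀ hμ₀
  have h₂₃ := h.commute_dist₂_dist₃ hk₀ hμ₀
  have hJA : Commute (1 + A + D₂ + D₃) A :=
    (((Commute.one_left A).add_left (Commute.refl A)).add_left hA₂.symm).add_left hA₃.symm
  have hJM : Commute (1 + A + D₂ + D₃) (lapGroupInverse k μ A D₂ D₃) :=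
    commute_lapGroupInverse hJA
      ((((Commute.one_left D₂).add_left hA₂).add_left (Commute.refl D₂)).add_left h₂₃.symm)
      ((((Commute.one_left D₃).add_left hA₃).add_left h₂₃).add_left (Commute.refl D₃))
  have hLM : Commute (k • 1 - A) (lapGroupInverse k μ A D₂ D₃) :=
    ((Commute.one_left _).smul_left k).sub_left
      (commute_lapGroupInverse (Commute.refl A) hA₂ hA₃)
  have hprod := h.lap_mul_lapGroupInverse hk₀ hμ₀ (vertexCount_pos hk hμ).ne'
  refine isGroupInverse_of_mul_eq hprod (hLM.eq ▸ hprod) ?_ ?_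
  · rw [sub_mul, one_mul, smul_mul_assoc, mul_sub, mul_smul_comm, mul_one, hJA.eq,
      h.adj_mul_ones, sub_self, smul_zero, sub_zero]
  · rw [sub_mul, one_mul, smul_mul_assoc, hJM.eq, h.lapGroupInverse_mul_ones hk₀ hμ₀, smul_zero,
      sub_zero]

end IntersectionRelations

theorem SimpleGraph.IsRegularOfDegree.intersectionRelations {V : Type*} [Fintype V]
    [DecidableEq V] {G : SimpleGraph V} [DecidableRel G.Adj] {k μ : ℕ}
    (hreg : G.IsRegularOfDegree k) (hconn : G.Connected) (hdiam : ∀ x y, G.dist x y ≤ 3)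
    (hk : 1 ≤ k) (hμk : μ ≤ k) {c b : ℕ → ℕ}
    (hc : ∀ (x y : V) (i : ℕ), G.dist x y = i → #{z | G.dist x z = i - 1 ∧ G.Adj y z} = c i)
    (hb : ∀ (x y : V) (i : ℕ), G.dist x y = i → #{z | G.dist x z = i + 1 ∧ G.Adj y z} = b i)
    (hc1 : c 1 = 1) (hc2 : c 2 = μ) (hc3 : c 3 = k)
    (hb0 : b 0 = k) (hb1 : b 1 = k - 1) (hb2 : b 2 = k - μ) (hb3 : b 3 = 0) :
    IntersectionRelations (k : ℝ) μ (G.adjMatrix ℝ) (G.distMatrix ℝ 2) (G.distMatrix ℝ 3) where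
  adj_mul_adj := by
    have h := hreg.adjMatrix_mul_distMatrix (R := ℝ) hc hb le_rfl
    simp only [Nat.sub_self, Nat.reduceAdd, distMatrix_one] at h
    rw [h, hconn.distMatrix_zero, hb0, hb1, hc1, hc2, show k - (k - 1) - 1 = 0 by omega,
      zero_smul, add_zero, Nat.cast_smul_eq_nsmul, Nat.cast_smul_eq_nsmul]
  adj_mul_dist₂ := by
    have h := hreg.adjMatrix_mul_distMatrix (R := ℝ) hc hb (by norm_num : 1 ≤ 2)
    simp only [Nat.reduceSub, Nat.reduceAdd, distMatrix_one] at h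
    rw [h, hb1, hb2, hc2, hc3, show k - (k - μ) - μ = 0 by omega, zero_smul, add_zero,
      ← Nat.cast_pred hk, Nat.cast_smul_eq_nsmul, Nat.cast_smul_eq_nsmul]
  adj_mul_dist₃ := by
    have h := hreg.adjMatrix_mul_distMatrix (R := ℝ) hc hb (by norm_num : 1 ≤ 3)
    simp only [Nat.reduceSub, Nat.reduceAdd] at h
    rw [h, hb2, hb3, hc3, distMatrix_eq_zero_of_lt (i := 4) hdiam (by norm_num), Nat.sub_zero,
      Nat.sub_self, zero_smul, smul_zero, add_zero, add_zero, ← Nat.cast_sub hμk,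
      Nat.cast_smul_eq_nsmul]

theorem stmt19_general {V : Type} [Fintype V] [DecidableEq V]
    (G : SimpleGraph V) [DecidableRel G.Adj]
    (hconn : G.Connected)
    (k μ : ℕ) (hμ1 : 1 ≤ μ) (hμk : μ ≤ k - 1)
    (hdiamub : ∀ x y : V, G.dist x y ≤ 3)
    (hdeg : ∀ x : V, G.degree x = k)
    (c b : ℕ → ℕ)
    (hc1 : c 1 = 1) (hc2 : c 2 = μ) (hc3 : c 3 = k)
    (hb0 : b 0 = k) (hb1 : b 1 = k - 1) (hb2 : b 2 = k - μ) (hb3 : b 3 = 0)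
    (hc : ∀ (x y : V) (i : ℕ), G.dist x y = i →
      (Finset.univ.filter (fun z => G.dist x z = i - 1 ∧ G.Adj y z)).card = c i)
    (hb : ∀ (x y : V) (i : ℕ), G.dist x y = i →
      (Finset.univ.filter (fun z => G.dist x z = i + 1 ∧ G.Adj y z)).card = b i)
    (Lsharp : Matrix V V ℝ)
    (hLs1 : G.lapMatrix ℝ * Lsharp * G.lapMatrix ℝ = G.lapMatrix ℝ)
    (hLs2 : Lsharp * G.lapMatrix ℝ * Lsharp = Lsharp)
    (hLs3 : G.lapMatrix ℝ * Lsharp = Lsharp * G.lapMatrix ℝ) :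
    ((∀ x y : V, x ≠ y → Lsharp x y ≤ 0) ↔ (4 * k ≤ 5 * μ ∧ μ ≤ k - 1)) ∧
    (4 * k ≤ 5 * μ ∧ μ ≤ k - 1 → 5 ≤ k) := by
  have hkR : (1 : ℝ) ≤ k := by exact_mod_cast (by omega : 1 ≤ k)
  have hμR : (0 : ℝ) < μ := by exact_mod_cast hμ1
  have hμkR : (μ : ℝ) ≤ 2 * k := by exact_mod_cast (by omega : μ ≤ 2 * k)
  have hrel := IsRegularOfDegree.intersectionRelations hdeg hconn hdiamub (by omega) (by omega)
    hc hb hc1 hc2 hc3 hb0 hb1 hb2 hb3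
  have hLsharp : Lsharp = ∑ i ∈ range 4, lapInvCoeff k μ i • G.distMatrix ℝ i := by
    refine IsGroupInverse.unique ⟨hLs1, hLs2, hLs3⟩ ?_
    simpa [lapGroupInverse, sum_range_succ, hconn.distMatrix_zero, distMatrix_one,
      IsRegularOfDegree.lapMatrix_eq (R := ℝ) hdeg] using hrel.isGroupInverse hkR hμR
  have hentry (x y : V) : Lsharp x y = lapInvCoeff k μ (G.dist x y) :=
    hLsharp ▸ sum_smul_distMatrix_apply _ (hdiamub x y)
  have ha₁ := lapInvCoeff_one_nonpos_iff hμ1 (by omega : μ + 1 ≤ k)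
  refine ⟨⟨fun hM => ⟨?_, hμk⟩, fun h x y hxy => ?_⟩, fun h => by omega⟩
  · obtain ⟨x⟩ := hconn.nonempty
    obtain ⟨z, hz⟩ := (G.degree_pos_iff_exists_adj x).mp (by rw [hdeg]; omega)
    rw [← ha₁, ← dist_eq_one_iff_adj.mpr hz, ← hentry]
    exact hM x z hz.ne
  · rw [hentry]
    exact (lapInvCoeff_le_lapInvCoeff_one hkR hμR hμkR (hconn.pos_dist_of_ne hxy)).trans
      (ha₁.mpr h.1)

theorem stmt19 {V : Type} [Fintype V] [DecidableEq V]
    (G : SimpleGraph V) [DecidableRel G.Adj]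
    (hconn : G.Connected)
    (k μ : ℕ) (hμ1 : 1 ≤ μ) (hμk : μ ≤ k - 1)
    (hbip : ∃ σ : V → Fin 2, ∀ x y : V, G.Adj x y → σ x ≠ σ y)
    (hdiamub : ∀ x y : V, G.dist x y ≤ 3)
    (hdiam3 : ∃ x y : V, G.dist x y = 3)
    (hdeg : ∀ x : V, G.degree x = k)
    (c b : ℕ → ℕ)
    (hc1 : c 1 = 1) (hc2 : c 2 = μ) (hc3 : c 3 = k)
    (hb0 : b 0 = k) (hb1 : b 1 = k - 1) (hb2 : b 2 = k - μ) (hb3 : b 3 = 0)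
    (hc : ∀ (x y : V) (i : ℕ), G.dist x y = i →
      (Finset.univ.filter (fun z => G.dist x z = i - 1 ∧ G.Adj y z)).card = c i)
    (hb : ∀ (x y : V) (i : ℕ), G.dist x y = i →
      (Finset.univ.filter (fun z => G.dist x z = i + 1 ∧ G.Adj y z)).card = b i)
    (Lsharp : Matrix V V ℝ)
    (hLs1 : G.lapMatrix ℝ * Lsharp * G.lapMatrix ℝ = G.lapMatrix ℝ)
    (hLs2 : Lsharp * G.lapMatrix ℝ * Lsharp = Lsharp)
    (hLs3 : G.lapMatrix ℝ * Lsharp = Lsharp * G.lapMatrix ℝ) :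
    ((∀ x y : V, x ≠ y → Lsharp x y ≤ 0) ↔ (4 * k ≤ 5 * μ ∧ μ ≤ k - 1)) ∧
    (4 * k ≤ 5 * μ ∧ μ ≤ k - 1 → 5 ≤ k) :=
  stmt19_general G hconn k μ hμ1 hμk hdiamub hdeg c b hc1 hc2 hc3 hb0 hb1 hb2 hb3 hc hb Lsharp hLs1
    hLs2 hLs3
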